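/- The scaled Newton polynomial sequence r₀(x) = ζ₀, r_{2^{j+1}−1}(x) = ζ_{j+1}(2r_{2^j−1}(x) − x·r_{2^j−1}(x)²), with ζ₀ = 2/(α+β), ζ₁ = 2/(1 + 2αζ₀ − (αζ₀)²), ζ_{j+1} = 2/(1 + 2ζ_j − ζ_j²) for j ≥ 1, coincides with the Chebyshev doubling sequence p_{2^j−1} defined by p₀(x) = 1/θ, p_{2k−1}(x) = (2σ_k²/σ_{2k})(2p_{k−1}(x) − x·p_{k−1}(x)²), where θ = (α+β)/2, σ = θ/δ, δ = (β−α)/2, σ_k = T_k(σ). -/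

import Mathlib

/-!
Write `c j = T_{2^j}(σ)`. Since `T_{2n} = T_2 ∘ T_n`, `c (j+1) = 2 c_j² - 1`, so the Chebyshev
coefficient `2 c_j² / c_{j+1}` equals `1 + 1 / c_{j+1}`. The Newton scaling map
`z ↦ 2 / (1 + 2z - z²) = 2 / (2 - (z - 1)²)` only sees `(z - 1)²`, and sends any `z` with
`(z - 1)² = 1 / c²` to `2c² / (2c² - 1)`. Since `α ζ₀ - 1 = -1/σ`, and `ζ_{j+1} - 1 = 1 / c_{j+1}`
by induction, the scaling factors `ζ_{j+1}` are the Chebyshev coefficients; `σ > 1` keeps every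
`c j ≥ 1` away from zero. The two polynomial recursions then agree term by term.
-/

open Polynomial Polynomial.Chebyshev

theorem Polynomial.Chebyshev.eval_T_two_mul {R : Type*} [CommRing R] (n : ℤ) (x : R) :
    (T R (2 * n)).eval x = 2 * (T R n).eval x ^ 2 - 1 := by
  simp [T_mul, T_two]

theorem two_div_one_add_two_mul_sub_sq_eq {K : Type*} [Field K] {c z : K} (hc : c ≠ 0)
    (hz : (z - 1) ^ 2 = (c ^ 2)⁻¹) :
    2 / (1 + 2 * z - z ^ 2) = 2 * c ^ 2 / (2 * c ^ 2 - 1) := by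
  have hsq : 1 + 2 * z - z ^ 2 = 2 - (c ^ 2)⁻¹ := by rw [← hz]; ring
  rw [hsq, ← mul_div_mul_right 2 _ (pow_ne_zero 2 hc), sub_mul, inv_mul_cancel₀ (pow_ne_zero 2 hc)]

theorem newton_scale_eq_chebyshev_coeff {K : Type*} [Field K] {c ζ : ℕ → K}
    (hc : ∀ j, c j ≠ 0) (hc_succ : ∀ j, c (j + 1) = 2 * c j ^ 2 - 1)
    (hζ1 : ζ 1 = 2 * c 0 ^ 2 / c 1)
    (hζ : ∀ j, 1 ≤ j → ζ (j + 1) = 2 / (1 + 2 * ζ j - ζ j ^ 2)) :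
    ∀ j, ζ (j + 1) = 2 * c j ^ 2 / c (j + 1) := by
  intro j
  induction j with
  | zero => exact hζ1
  | succ j ih =>
    have hsub : ζ (j + 1) - 1 = (c (j + 1))⁻¹ := by
      have hcj := hc (j + 1)
      rw [ih, hc_succ j]
      rw [hc_succ j] at hcj
      field_simp
      ring
    have hsq : (ζ (j + 1) - 1) ^ 2 = (c (j + 1) ^ 2)⁻¹ := by rw [hsub, inv_pow]
    rw [hζ (j + 1) le_add_self, two_div_one_add_two_mul_sub_sq_eq (hc (j + 1)) hsq, hc_succ (j + 1)]

/-- The scaled Newton polynomial sequence `r_{2^j-1}` coincides with the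
Chebyshev doubling sequence `p_{2^j-1}` (here `r j`, `p j` denote the
polynomials of degree `2^j - 1`). -/
theorem stmt_12 (α β : ℝ) (hα : 0 < α) (hαβ : α < β)
    (θ δ σ : ℝ) (hθ : θ = (α + β) / 2) (hδ : δ = (β - α) / 2) (hσ : σ = θ / δ)
    (σk : ℕ → ℝ) (hσk : ∀ k, σk k = (Polynomial.Chebyshev.T ℝ (k : ℤ)).eval σ)
    (ζ : ℕ → ℝ)
    (hζ0 : ζ 0 = 2 / (α + β))
    (hζ1 : ζ 1 = 2 / (1 + 2 * (α * ζ 0) - (α * ζ 0) ^ 2))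
    (hζ : ∀ j, 1 ≤ j → ζ (j + 1) = 2 / (1 + 2 * ζ j - (ζ j) ^ 2))
    (r : ℕ → ℝ → ℝ)
    (hr0 : ∀ x, r 0 x = ζ 0)
    (hr : ∀ j x, r (j + 1) x = ζ (j + 1) * (2 * r j x - x * (r j x) ^ 2))
    (p : ℕ → ℝ → ℝ)
    (hp0 : ∀ x, p 0 x = 1 / θ)
    (hp : ∀ j x, p (j + 1) x =
      (2 * (σk (2 ^ j)) ^ 2 / σk (2 ^ (j + 1))) * (2 * p j x - x * (p j x) ^ 2)) :
    ∀ j, r j = p j := by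
  have hσ1 : 1 < σ := by
    rw [hσ, hθ, hδ, lt_div_iff₀ (by linarith)]
    linarith
  have hσk_succ : ∀ j, σk (2 ^ (j + 1)) = 2 * σk (2 ^ j) ^ 2 - 1 := fun j => by
    rw [hσk, hσk, ← eval_T_two_mul]
    push_cast [pow_succ']
    rfl
  have hσk_ne : ∀ j, σk (2 ^ j) ≠ 0 := fun j =>
    (zero_lt_one.trans_le (hσk _ ▸ one_le_eval_T_real _ hσ1.le)).ne'
  have hσk_one : σk (2 ^ 0) = σ := by simp [hσk]
  have hαζ0 : (α * ζ 0 - 1) ^ 2 = (σ ^ 2)⁻¹ := by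
    have hαβ_ne : α + β ≠ 0 := by linarith
    have hβα_ne : β - α ≠ 0 := by linarith
    rw [hζ0, hσ, hθ, hδ]
    field_simp
    ring
  have hζ1' : ζ 1 = 2 * σk (2 ^ 0) ^ 2 / σk (2 ^ 1) := by
    rw [hζ1, two_div_one_add_two_mul_sub_sq_eq (hσk_one ▸ hσk_ne 0) hαζ0, hσk_succ, hσk_one]
  have hscale := newton_scale_eq_chebyshev_coeff hσk_ne hσk_succ hζ1' hζ
  intro j
  induction j with
  | zero =>
    funext x
    rw [hr0, hp0, hζ0, hθ, one_div_div]
  | succ j ih =>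
    funext x
    rw [hr, hp, hscale j, ih]
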